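/- Let f be a Boolean function on the slice {x ∈ {0,1}^{n+1} : Σx_i = k+b}, b ∈ {0,1}, with M+2 ≤ k ≤ n+1−(M+2). Let ℓ, r be distinct coordinates, S_ℓ ⊆ [n+1]\{ℓ} with |S_ℓ| ≤ M, r ∉ S_ℓ ∪ {ℓ}, and suppose the restriction f_ℓ of f to {x_ℓ = b} equals g_ℓ(x|_{S_ℓ}) where g_ℓ depends on all inputs. Then for every i ∈ S_ℓ and every j ∉ S_ℓ ∪ {ℓ, r}, the restriction f_r of f to {x_r = b} satisfies f_r ≠ f_r^{(i j)}. -/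
import Mathlib


/-- Hamming weight of a Boolean vector. -/
def wt {n : ℕ} (x : Fin n → Bool) : ℕ :=
  (Finset.univ.filter fun t => x t = true).card

lemma wt_comp_perm {n : ℕ} (e : Equiv.Perm (Fin n)) (x : Fin n → Bool) :
    wt (x ∘ e) = wt x := by
  unfold wt
  apply Finset.card_equiv e
  intro t
  simp

theorem stmt12 (n k M : ℕ) (b : Bool) (hk1 : M + 2 ≤ k) (hk2 : k ≤ n + 1 - (M + 2))
    (f : (Fin (n + 1) → Bool) → Bool) (l r : Fin (n + 1)) (hlr : l ≠ r)
    (Sl : Finset (Fin (n + 1))) (hlS : l ∉ Sl) (hrS : r ∉ Sl) (hcard : Sl.card ≤ M)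
    (gl : (Sl → Bool) → Bool)
    (hrep : ∀ x : Fin (n + 1) → Bool,
      wt x = k + (if b then 1 else 0) → x l = b → f x = gl (fun j => x j.1))
    (hdep : ∀ j : Sl, ∃ y z : Sl → Bool, (∀ t, t ≠ j → y t = z t) ∧ gl y ≠ gl z) :
    ∀ i ∈ Sl, ∀ j : Fin (n + 1), j ∉ Sl → j ≠ l → j ≠ r →
      ∃ x : Fin (n + 1) → Bool, wt x = k + (if b then 1 else 0) ∧ x r = b ∧
        f (x ∘ Equiv.swap i j) ≠ f x := by
  intro i hi j hjSl hjl hjr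
  obtain ⟨y, z, hyz, hg⟩ := hdep ⟨i, hi⟩
  set b' : ℕ := (if b then 1 else 0) with hb'def
  have hb'le : b' ≤ 1 := by cases b <;> simp [hb'def]
  have hne : y ⟨i, hi⟩ ≠ z ⟨i, hi⟩ := by
    intro h
    apply hg
    have hyzeq : y = z := by
      funext t
      by_cases ht : t = ⟨i, hi⟩
      · subst ht; exact h
      · exact hyz t ht
    rw [hyzeq]
  set yi : Bool := y ⟨i, hi⟩ with hyidef
  have hzi : z ⟨i, hi⟩ = !yi := by
    cases hzz : z ⟨i, hi⟩ <;> cases hyy : y ⟨i, hi⟩ <;> simp_all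
  -- distinctness facts
  have hil : i ≠ l := fun h => hlS (h ▸ hi)
  have hir : i ≠ r := fun h => hrS (h ▸ hi)
  have hij : i ≠ j := fun h => hjSl (h ▸ hi)
  -- the prescribed values
  set v : Fin (n + 1) → Bool := fun t =>
    if h : t ∈ Sl then y ⟨t, h⟩ else if t = j then !yi else
      if t = l then b else if t = r then b else false with hvdef
  have hvl : v l = b := by simp [hvdef, hlS, Ne.symm hjl]
  have hvr : v r = b := by simp [hvdef, hrS, Ne.symm hjr, Ne.symm hlr]
  have hvj : v j = !yi := by simp [hvdef, hjSl]
  have hvmem : ∀ t (ht : t ∈ Sl), v t = y ⟨t, ht⟩ := by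
    intro t ht; simp [hvdef, ht]
  have hvi : v i = yi := by rw [hvmem i hi]
  set T : Finset (Fin (n + 1)) := insert l (insert r (insert j Sl)) with hTdef
  have hlT : l ∈ T := by simp [hTdef]
  have hrT : r ∈ T := by simp [hTdef]
  have hjT : j ∈ T := by simp [hTdef]
  have hST : ∀ t ∈ Sl, t ∈ T := by intro t ht; simp [hTdef, ht]
  have hTcard : T.card = Sl.card + 3 := by
    rw [hTdef, Finset.card_insert_of_notMem (by simp [hlS, hlr, Ne.symm hjl]),
      Finset.card_insert_of_notMem (by simp [hrS, Ne.symm hjr]),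
      Finset.card_insert_of_notMem hjSl]
  set pt : ℕ := (T.filter fun t => v t = true).card with hptdef
  -- the "bad" coordinate among i, j: where v is false
  set wb : Fin (n + 1) := if yi then j else i with hwbdef
  have hvwb : v wb = false := by
    rw [hwbdef]; cases hyy : yi <;> simp [hvj, hvi, hyy]
  have hwbmem : wb ∈ insert j Sl := by
    rw [hwbdef]; cases yi <;> simp [hi]
  -- the "good" coordinate among i, j: where v is true
  set wg : Fin (n + 1) := if yi then i else j with hwgdef
  have hvwg : v wg = true := by
    rw [hwgdef]; cases hyy : yi <;> simp [hvj, hvi, hyy]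
  have hwgT : wg ∈ T := by rw [hwgdef]; cases yi <;> simp [hjT, hST i hi]
  have hwgl : wg ≠ l := by rw [hwgdef]; cases yi <;> simpa using (by first | exact hil | exact hjl)
  have hwgr : wg ≠ r := by rw [hwgdef]; cases yi <;> simpa using (by first | exact hir | exact hjr)
  -- upper bound on pt
  have hpt_ub : pt ≤ Sl.card + 2 * b' := by
    cases hb : b
    · have hsub : (T.filter fun t => v t = true) ⊆ (insert j Sl).erase wb := by
        intro t ht
        rw [Finset.mem_filter] at ht
        obtain ⟨htT, htv⟩ := ht
        rw [Finset.mem_erase]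
        constructor
        · intro h; rw [h, hvwb] at htv; exact absurd htv (by simp)
        · rw [hTdef] at htT
          simp only [Finset.mem_insert] at htT ⊢
          rcases htT with h | h | h
          · rw [h, hvl, hb] at htv; exact absurd htv (by simp)
          · rw [h, hvr, hb] at htv; exact absurd htv (by simp)
          · exact h
      calc pt ≤ ((insert j Sl).erase wb).card := Finset.card_le_card hsub
        _ = (insert j Sl).card - 1 := Finset.card_erase_of_mem hwbmem
        _ ≤ (Sl.card + 1) - 1 := by
            have := Finset.card_insert_le j Sl; omega
        _ ≤ Sl.card + 2 * b' := by omega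
    · have hsub : (T.filter fun t => v t = true) ⊆ T.erase wb := by
        intro t ht
        rw [Finset.mem_filter] at ht
        obtain ⟨htT, htv⟩ := ht
        rw [Finset.mem_erase]
        refine ⟨fun h => ?_, htT⟩
        rw [h, hvwb] at htv; exact absurd htv (by simp)
      have hwbT : wb ∈ T := by
        rw [hTdef]; exact Finset.mem_insert_of_mem (Finset.mem_insert_of_mem hwbmem)
      calc pt ≤ (T.erase wb).card := Finset.card_le_card hsub
        _ = T.card - 1 := Finset.card_erase_of_mem hwbT
        _ = Sl.card + 2 := by omega
        _ ≤ Sl.card + 2 * b' := by simp [hb'def, hb]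
  -- lower bound on pt
  have hpt_lb : 1 + 2 * b' ≤ pt := by
    cases hb : b
    · have : wg ∈ T.filter fun t => v t = true := by
        rw [Finset.mem_filter]; exact ⟨hwgT, hvwg⟩
      have h1 := Finset.card_pos.mpr ⟨wg, this⟩
      have hb'0 : b' = 0 := by simp [hb'def, hb]
      omega
    · have hsub : ({l, r, wg} : Finset (Fin (n + 1))) ⊆ T.filter fun t => v t = true := by
        intro t ht
        rw [Finset.mem_filter]
        simp only [Finset.mem_insert, Finset.mem_singleton] at ht
        rcases ht with h | h | h
        · rw [h]; exact ⟨hlT, by rw [hvl, hb]⟩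
        · rw [h]; exact ⟨hrT, by rw [hvr, hb]⟩
        · rw [h]; exact ⟨hwgT, hvwg⟩
      have hc3 : ({l, r, wg} : Finset (Fin (n + 1))).card = 3 := by
        rw [Finset.card_insert_of_notMem (by simp [hlr, Ne.symm hwgl]),
          Finset.card_insert_of_notMem (by simp [Ne.symm hwgr]),
          Finset.card_singleton]
      have h1 := Finset.card_le_card hsub
      have hb'1 : b' = 1 := by simp [hb'def, hb]
      rw [hc3] at h1
      omega
  -- arithmetic
  have hn : M + 2 + k ≤ n + 1 := by omega
  have hTc : Tᶜ.card = n + 1 - (Sl.card + 3) := by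
    rw [Finset.card_compl, hTcard]; simp
  have hptk : pt ≤ k + b' := by omega
  set m : ℕ := k + b' - pt with hmdef
  have hmle : m ≤ Tᶜ.card := by rw [hTc]; omega
  obtain ⟨A, hAsub, hAcard⟩ := Finset.exists_subset_card_eq hmle
  set x : Fin (n + 1) → Bool := fun t => if t ∈ T then v t else decide (t ∈ A) with hxdef
  have hxT : ∀ t ∈ T, x t = v t := by intro t ht; simp [hxdef, ht]
  have hxl : x l = b := by rw [hxT l hlT, hvl]
  have hxr : x r = b := by rw [hxT r hrT, hvr]
  -- weight computation
  have hwt : wt x = k + b' := by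
    unfold wt
    have hsplit : (Finset.univ.filter fun t => x t = true) =
        (T.filter fun t => x t = true) ∪ (Tᶜ.filter fun t => x t = true) := by
      rw [← Finset.filter_union, Finset.union_compl]
    have hdisj : Disjoint (T.filter fun t => x t = true) (Tᶜ.filter fun t => x t = true) :=
      Finset.disjoint_filter_filter disjoint_compl_right
    rw [hsplit, Finset.card_union_of_disjoint hdisj]
    have h1 : (T.filter fun t => x t = true) = (T.filter fun t => v t = true) := by
      apply Finset.filter_congr
      intro t ht
      rw [hxT t ht]
    have h2 : (Tᶜ.filter fun t => x t = true) = A := by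
      ext t
      rw [Finset.mem_filter]
      constructor
      · rintro ⟨htc, htx⟩
        rw [Finset.mem_compl] at htc
        simpa [hxdef, htc] using htx
      · intro htA
        have htc : t ∈ Tᶜ := hAsub htA
        refine ⟨htc, ?_⟩
        rw [Finset.mem_compl] at htc
        simp [hxdef, htc, htA]
    rw [h1, h2, hAcard, ← hptdef, hmdef]
    omega
  have hwt2 : wt (x ∘ Equiv.swap i j) = k + b' := by rw [wt_comp_perm]; exact hwt
  have hswapl : (x ∘ Equiv.swap i j) l = b := by
    have : Equiv.swap i j l = l := Equiv.swap_apply_of_ne_of_ne (Ne.symm hil) (Ne.symm hjl)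
    simp only [Function.comp_apply, this]; exact hxl
  -- f x = gl y
  have hfx : f x = gl y := by
    rw [hrep x hwt hxl]
    congr 1
    funext t
    rw [hxT t.1 (hST t.1 t.2), hvmem t.1 t.2]
  -- f (x ∘ swap) = gl z
  have hfx2 : f (x ∘ Equiv.swap i j) = gl z := by
    rw [hrep _ hwt2 hswapl]
    congr 1
    funext t
    by_cases ht : t = ⟨i, hi⟩
    · subst ht
      simp only [Function.comp_apply, Equiv.swap_apply_left]
      rw [hxT j hjT, hvj, hzi]
    · have ht1 : (t : Fin (n + 1)) ≠ i := fun h => ht (Subtype.ext h)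
      have ht2 : (t : Fin (n + 1)) ≠ j := fun h => hjSl (h ▸ t.2)
      simp only [Function.comp_apply, Equiv.swap_apply_of_ne_of_ne ht1 ht2]
      rw [hxT t.1 (hST t.1 t.2), hvmem t.1 t.2, hyz t ht]
  exact ⟨x, hwt, hxr, by rw [hfx, hfx2]; exact fun h => hg h.symm⟩
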